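/- Let X, Y ⊂ R^n be closed convex with S := X ∩ Y ≠ ∅, and suppose the error bound ω·dist(z,S) ≤ max{dist(z,X), dist(z,Y)} holds for all z ∈ V with ω ∈ (0,1); set β := √(1−ω²). Let T be admissible, α ∈ (0,1), N^α := αT + (1−α)P_X T, and C^α := PCRM ∘ N^α. Then for every z ∈ V (such that the relevant points remain in V): dist(C^α z, S) ≤ β(α + (1−α)β)·dist(Tz, S). -/

import Mathlib

/-!
The distance to `S = X ∩ Y` is convex, so it contracts along the segment from `T z` to its
projection onto `X` once the projection itself advances. Both advances come from one estimate:
if `c` is the projection of `w` onto a convex set containing `S` and, by the error bound,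
`‖w - c‖ ≥ ω · dist(w, S)`, then Pythagoras at every `s ∈ S` gives
`dist(c, S)² + ω² dist(w, S)² ≤ dist(w, S)²`. For the projection onto `X` of `T z ∈ Y` the
residual is `dist(T z, X)`; for the circumcentered-reflection step at the centralized point
`w = α T z + (1 - α) P_X (T z)` the residual `‖w - C w‖` dominates both `‖w - P_X w‖` and
`‖w - P_Y w‖`, since `C w` lies in both supporting halfspaces.
-/

open Metric
open scoped RealInnerProductSpace

section Distance

variable {E : Type*} [NormedAddCommGroup E] [NormedSpace ℝ E]

theorem Convex.convexOn_infDist {S : Set E} (hS : Convex ℝ S) :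
    ConvexOn ℝ Set.univ (infDist · S) := by
  rcases S.eq_empty_or_nonempty with rfl | hne
  · simpa only [infDist_empty] using convexOn_const (0 : ℝ) convex_univ
  have := hne.to_subtype
  refine ⟨convex_univ, fun x _ y _ a b ha hb hab => ?_⟩
  simp only [smul_eq_mul]
  have key : ∀ s ∈ S, ∀ t ∈ S, infDist (a • x + b • y) S ≤ a * dist x s + b * dist y t := by
    intro s hs t ht
    calc infDist (a • x + b • y) S ≤ dist (a • x + b • y) (a • s + b • t) :=
          infDist_le_dist_of_mem (hS hs ht ha hb hab)
      _ ≤ dist (a • x) (a • s) + dist (b • y) (b • t) := dist_add_add_le _ _ _ _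
      _ = a * dist x s + b * dist y t := by
          rw [dist_smul₀, dist_smul₀, Real.norm_of_nonneg ha, Real.norm_of_nonneg hb]
  have hx : ∀ t ∈ S, infDist (a • x + b • y) S - b * dist y t ≤ a * infDist x S := by
    intro t ht
    rw [infDist_eq_iInf (x := x), Real.mul_iInf_of_nonneg ha]
    exact le_ciInf fun s => by linarith [key s s.2 t ht]
  have hy : infDist (a • x + b • y) S - a * infDist x S ≤ b * infDist y S := by
    rw [infDist_eq_iInf (x := y), Real.mul_iInf_of_nonneg hb]
    exact le_ciInf fun t => by linarith [hx t t.2]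
  linarith

end Distance

section Projection

variable {E : Type*} [NormedAddCommGroup E] [InnerProductSpace ℝ E]

theorem norm_sub_sq_add_norm_sub_sq_le_of_inner_nonpos {w c s : E} (h : ⟪w - c, s - c⟫ ≤ 0) :
    ‖w - c‖ ^ 2 + ‖c - s‖ ^ 2 ≤ ‖w - s‖ ^ 2 := by
  have hexp := norm_sub_sq_real (w - c) (s - c)
  rw [sub_sub_sub_cancel_right] at hexp
  rw [norm_sub_rev c s]
  linarith

theorem norm_sub_le_of_inner_nonpos {w c s : E} (h : ⟪w - c, s - c⟫ ≤ 0) :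
    ‖w - c‖ ≤ ‖w - s‖ := by
  have := norm_sub_sq_add_norm_sub_sq_le_of_inner_nonpos h
  exact (pow_le_pow_iff_left₀ (norm_nonneg _) (norm_nonneg _) two_ne_zero).1
    (by nlinarith [sq_nonneg ‖c - s‖])

theorem infDist_le_sqrt_one_sub_sq_mul {S : Set E} {w c : E} {ω : ℝ} (hω : 0 ≤ ω)
    (hobtuse : ∀ s ∈ S, ⟪w - c, s - c⟫ ≤ 0) (hres : ω * infDist w S ≤ ‖w - c‖) :
    infDist c S ≤ √(1 - ω ^ 2) * infDist w S := by
  rcases S.eq_empty_or_nonempty with rfl | hne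
  · simp only [infDist_empty, mul_zero, le_refl]
  set D := infDist w S
  set d := infDist c S
  have hD : 0 ≤ D := infDist_nonneg
  have hd : 0 ≤ d := infDist_nonneg
  have hpyth : √(d ^ 2 + (ω * D) ^ 2) ≤ D := by
    refine (le_infDist hne).2 fun s hs => ?_
    have hcs : d ≤ ‖c - s‖ := by simpa only [dist_eq_norm] using infDist_le_dist_of_mem hs
    have hwc : (ω * D) ^ 2 ≤ ‖w - c‖ ^ 2 := pow_le_pow_left₀ (by positivity) hres 2
    rw [Real.sqrt_le_left dist_nonneg, dist_eq_norm]
    nlinarith [norm_sub_sq_add_norm_sub_sq_le_of_inner_nonpos (hobtuse s hs)]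
  have hsq : d ^ 2 ≤ (1 - ω ^ 2) * D ^ 2 := by
    rw [Real.sqrt_le_left hD] at hpyth
    linarith
  calc d = √(d ^ 2) := (Real.sqrt_sq hd).symm
    _ ≤ √((1 - ω ^ 2) * D ^ 2) := Real.sqrt_le_sqrt hsq
    _ ≤ √(1 - ω ^ 2) * D := by rw [Real.sqrt_mul' _ (sq_nonneg D), Real.sqrt_sq hD]

def IsProjectionOnto (K : Set E) (P : E → E) : Prop :=
  ∀ u, P u ∈ K ∧ ∀ x ∈ K, ⟪u - P u, x - P u⟫ ≤ 0

def supportingHalfspace (P : E → E) (w : E) : Set E :=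
  {v | ⟪v - P w, w - P w⟫ ≤ 0}

def IsCentralized (PX PY : E → E) (w : E) : Prop :=
  ⟪w - PX w, w - PY w⟫ ≤ 0

namespace IsProjectionOnto

variable {K : Set E} {P : E → E}

theorem infDist_le (hP : IsProjectionOnto K P) (u : E) : infDist u K ≤ ‖u - P u‖ := by
  simpa only [dist_eq_norm] using infDist_le_dist_of_mem (hP u).1

theorem subset_supportingHalfspace (hP : IsProjectionOnto K P) (w : E) :
    K ⊆ supportingHalfspace P w := fun x hx =>
  (real_inner_comm (w - P w) (x - P w)).trans_le ((hP w).2 x hx)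

theorem inner_sub_nonpos (hP : IsProjectionOnto K P) (u : E) {x : E} (hx : x ∈ K) :
    ⟪x - u, u - P u⟫ ≤ 0 := by
  have hsplit : ⟪x - P u, u - P u⟫ = ⟪x - u, u - P u⟫ + ‖u - P u‖ ^ 2 := by
    rw [← real_inner_self_eq_norm_sq, ← inner_add_left, sub_add_sub_cancel]
  rw [real_inner_comm] at hsplit
  nlinarith [(hP u).2 x hx, sq_nonneg ‖u - P u‖]

theorem apply_eq_of_inner_nonpos (hP : IsProjectionOnto K P) {u p : E} (hp : p ∈ K)
    (h : ∀ x ∈ K, ⟪u - p, x - p⟫ ≤ 0) : P u = p := by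
  have hsum : ⟪u - P u, p - P u⟫ + ⟪u - p, P u - p⟫ = ‖p - P u‖ ^ 2 := by
    rw [← inner_neg_neg (u - p), neg_sub, neg_sub, ← inner_add_left, sub_add_sub_cancel',
      real_inner_self_eq_norm_sq]
  have hzero : ‖p - P u‖ ^ 2 ≤ 0 := by
    linarith [(hP u).2 p hp, h (P u) (hP u).1]
  rw [← sub_eq_zero, ← norm_eq_zero]
  nlinarith [norm_nonneg (p - P u), norm_sub_rev p (P u)]

theorem apply_smul_add_smul_self (hP : IsProjectionOnto K P) (y : E) {α : ℝ} (hα : 0 ≤ α) :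
    P (α • y + (1 - α) • P y) = P y := by
  refine hP.apply_eq_of_inner_nonpos (hP y).1 fun x hx => ?_
  have hw : α • y + (1 - α) • P y - P y = α • (y - P y) := by module
  rw [hw, real_inner_smul_left]
  exact mul_nonpos_of_nonneg_of_nonpos hα ((hP y).2 x hx)

end IsProjectionOnto

variable {X Y : Set E} {PX PY : E → E}

theorem isCentralized_smul_add_smul_proj (hPX : IsProjectionOnto X PX)
    (hPY : IsProjectionOnto Y PY) {y : E} (hy : y ∈ Y) {α : ℝ} (hα0 : 0 ≤ α) (hα1 : α < 1) :
    IsCentralized PX PY (α • y + (1 - α) • PX y) := by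
  set w := α • y + (1 - α) • PX y
  have hcomb : (1 - α) • (w - PX y) = α • (y - w) := by module
  have hscaled : (1 - α) * ⟪w - PX y, w - PY w⟫ = α * ⟪y - w, w - PY w⟫ := by
    rw [← real_inner_smul_left, hcomb, real_inner_smul_left]
  have hobtuse := mul_nonpos_of_nonneg_of_nonpos hα0 (hPY.inner_sub_nonpos w hy)
  rw [IsCentralized, hPX.apply_smul_add_smul_self y hα0]
  nlinarith

variable {ω : ℝ}

theorem IsProjectionOnto.infDist_apply_le_of_mem (hPX : IsProjectionOnto X PX) {y : E}
    (hy : y ∈ Y) (hω : 0 ≤ ω)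
    (hEB : ω * infDist y (X ∩ Y) ≤ max (infDist y X) (infDist y Y)) :
    infDist (PX y) (X ∩ Y) ≤ √(1 - ω ^ 2) * infDist y (X ∩ Y) := by
  refine infDist_le_sqrt_one_sub_sq_mul hω (fun s hs => (hPX y).2 s hs.1) ?_
  rw [infDist_zero_of_mem hy, max_eq_left infDist_nonneg] at hEB
  exact hEB.trans (hPX.infDist_le y)

theorem infDist_circumcenter_le (hPX : IsProjectionOnto X PX) (hPY : IsProjectionOnto Y PY)
    {w c : E} (hc : c ∈ supportingHalfspace PX w ∩ supportingHalfspace PY w)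
    (hmin : ∀ v ∈ supportingHalfspace PX w ∩ supportingHalfspace PY w, ⟪w - c, v - c⟫ ≤ 0)
    (hω : 0 ≤ ω) (hEB : ω * infDist w (X ∩ Y) ≤ max (infDist w X) (infDist w Y)) :
    infDist c (X ∩ Y) ≤ √(1 - ω ^ 2) * infDist w (X ∩ Y) := by
  have hres : ∀ {K : Set E} {P : E → E}, IsProjectionOnto K P →
      c ∈ supportingHalfspace P w → infDist w K ≤ ‖w - c‖ := fun hP hcP =>
    (hP.infDist_le w).trans (norm_sub_le_of_inner_nonpos (by rwa [real_inner_comm]))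
  refine infDist_le_sqrt_one_sub_sq_mul hω (fun s hs => hmin s ?_) ?_
  · exact ⟨hPX.subset_supportingHalfspace w hs.1, hPY.subset_supportingHalfspace w hs.2⟩
  · exact hEB.trans (max_le (hres hPX hc.1) (hres hPY hc.2))

end Projection

theorem stmt_15_general {n : ℕ} {X Y : Set (EuclideanSpace ℝ (Fin n))}
    (hXconv : Convex ℝ X)
    (hYconv : Convex ℝ Y)
    (PX PY : EuclideanSpace ℝ (Fin n) → EuclideanSpace ℝ (Fin n))
    (hPX : ∀ u, PX u ∈ X ∧ ∀ x ∈ X, ⟪u - PX u, x - PX u⟫ ≤ 0)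
    (hPY : ∀ u, PY u ∈ Y ∧ ∀ x ∈ Y, ⟪u - PY u, x - PY u⟫ ≤ 0)
    (V : Set (EuclideanSpace ℝ (Fin n))) (ω : ℝ) (hω : ω ∈ Set.Ioo (0:ℝ) 1)
    (hEB : ∀ v ∈ V, ω * infDist v (X ∩ Y) ≤ max (infDist v X) (infDist v Y))
    (T : EuclideanSpace ℝ (Fin n) → EuclideanSpace ℝ (Fin n))
    (hTY : ∀ u, T u ∈ Y)
    (C : EuclideanSpace ℝ (Fin n) → EuclideanSpace ℝ (Fin n))
    (hC : ∀ w : EuclideanSpace ℝ (Fin n), ⟪w - PX w, w - PY w⟫ ≤ 0 →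
      C w ∈ {v | ⟪v - PX w, w - PX w⟫ ≤ 0} ∩ {v | ⟪v - PY w, w - PY w⟫ ≤ 0} ∧
      ∀ v ∈ {v | ⟪v - PX w, w - PX w⟫ ≤ 0} ∩ {v | ⟪v - PY w, w - PY w⟫ ≤ 0},
        ⟪w - C w, v - C w⟫ ≤ 0)
    (α : ℝ) (hα : α ∈ Set.Ioo (0:ℝ) 1)
    (z : EuclideanSpace ℝ (Fin n))
    -- the relevant points remain in V
    (hTzV : T z ∈ V) (hNzV : α • T z + (1 - α) • PX (T z) ∈ V) :
    infDist (C (α • T z + (1 - α) • PX (T z))) (X ∩ Y) ≤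
      Real.sqrt (1 - ω ^ 2) * (α + (1 - α) * Real.sqrt (1 - ω ^ 2)) *
        infDist (T z) (X ∩ Y) := by
  set β := √(1 - ω ^ 2)
  set w := α • T z + (1 - α) • PX (T z)
  have hcen : IsCentralized PX PY w :=
    isCentralized_smul_add_smul_proj hPX hPY (hTY z) hα.1.le hα.2
  obtain ⟨hCmem, hCmin⟩ := hC w hcen
  have hadvC : infDist (C w) (X ∩ Y) ≤ β * infDist w (X ∩ Y) :=
    infDist_circumcenter_le hPX hPY hCmem hCmin hω.1.le (hEB w hNzV)
  have hadvX : infDist (PX (T z)) (X ∩ Y) ≤ β * infDist (T z) (X ∩ Y) :=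
    IsProjectionOnto.infDist_apply_le_of_mem hPX (hTY z) hω.1.le (hEB _ hTzV)
  have hconv : infDist w (X ∩ Y) ≤
      α * infDist (T z) (X ∩ Y) + (1 - α) * infDist (PX (T z)) (X ∩ Y) := by
    simpa only [smul_eq_mul] using (hXconv.inter hYconv).convexOn_infDist.2 (Set.mem_univ _)
      (Set.mem_univ _) hα.1.le (sub_nonneg.2 hα.2.le) (add_sub_cancel α 1)
  have hβ : 0 ≤ β := Real.sqrt_nonneg _
  calc infDist (C w) (X ∩ Y) ≤ β * infDist w (X ∩ Y) := hadvC
    _ ≤ β * (α * infDist (T z) (X ∩ Y) + (1 - α) * (β * infDist (T z) (X ∩ Y))) := by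
        gcongr
        exact hconv.trans (by gcongr; linarith [hα.2])
    _ = β * (α + (1 - α) * β) * infDist (T z) (X ∩ Y) := by ring

theorem stmt_15 {n : ℕ} {X Y : Set (EuclideanSpace ℝ (Fin n))}
    (hXc : IsClosed X) (hXconv : Convex ℝ X)
    (hYc : IsClosed Y) (hYconv : Convex ℝ Y)
    (hS : (X ∩ Y).Nonempty)
    (PX PY : EuclideanSpace ℝ (Fin n) → EuclideanSpace ℝ (Fin n))
    (hPX : ∀ u, PX u ∈ X ∧ ∀ x ∈ X, ⟪u - PX u, x - PX u⟫ ≤ 0)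
    (hPY : ∀ u, PY u ∈ Y ∧ ∀ x ∈ Y, ⟪u - PY u, x - PY u⟫ ≤ 0)
    (V : Set (EuclideanSpace ℝ (Fin n))) (ω : ℝ) (hω : ω ∈ Set.Ioo (0:ℝ) 1)
    (hEB : ∀ v ∈ V, ω * infDist v (X ∩ Y) ≤ max (infDist v X) (infDist v Y))
    (T : EuclideanSpace ℝ (Fin n) → EuclideanSpace ℝ (Fin n))
    (hTY : ∀ u, T u ∈ Y)
    (hTqne : ∀ u, ∀ s ∈ X ∩ Y, ‖T u - s‖ ≤ ‖u - s‖)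
    (C : EuclideanSpace ℝ (Fin n) → EuclideanSpace ℝ (Fin n))
    (hC : ∀ w : EuclideanSpace ℝ (Fin n), ⟪w - PX w, w - PY w⟫ ≤ 0 →
      C w ∈ {v | ⟪v - PX w, w - PX w⟫ ≤ 0} ∩ {v | ⟪v - PY w, w - PY w⟫ ≤ 0} ∧
      ∀ v ∈ {v | ⟪v - PX w, w - PX w⟫ ≤ 0} ∩ {v | ⟪v - PY w, w - PY w⟫ ≤ 0},
        ⟪w - C w, v - C w⟫ ≤ 0)
    (α : ℝ) (hα : α ∈ Set.Ioo (0:ℝ) 1)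
    (z : EuclideanSpace ℝ (Fin n)) (hzV : z ∈ V)
    -- the relevant points remain in V
    (hTzV : T z ∈ V) (hNzV : α • T z + (1 - α) • PX (T z) ∈ V) :
    infDist (C (α • T z + (1 - α) • PX (T z))) (X ∩ Y) ≤
      Real.sqrt (1 - ω ^ 2) * (α + (1 - α) * Real.sqrt (1 - ω ^ 2)) *
        infDist (T z) (X ∩ Y) :=
  stmt_15_general hXconv hYconv PX PY hPX hPY V ω hω hEB T hTY C hC α hα z hTzV hNzV
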